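/- arXiv:1710.09002 — 3 statements merged into one kernel-verified Lean document; each statement's English description precedes it below -/
import Mathlib

section
/- Suppose 0 < α ≤ (ε/4)/log(mn‖A‖_∞/ε), 0 < ε ≤ 1/4, m,n ≥ 1, ‖A‖_∞ ≥ 1, and mn‖A‖_∞/ε > 1. If a real number v satisfies 0 ≤ v ≤ 1 − ε/2, then v^{1/α} ≤ ε/(m n ‖A‖_∞); consequently, if Ax ≤ (1−ε/2)·1 componentwise with Ax ≥ 0, then (α/(1+α)) Σ_{i=1}^m (Ax)_i^{(1+α)/α} ≤ (ε/4)·(1/‖A‖_∞). -/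
/-! The bound `1 - δ ≤ exp (-δ)` gives `v ^ (1/α) ≤ exp (-δ/α)` for `0 ≤ v ≤ 1 - δ`, and the choice of
`α` makes `δ/α ≥ log (m n M / ε)`, so every such power is at most `ε / (m n M)`. The exponent
`(1 + α)/α` only makes the powers smaller, so summing over the `m` rows and using `α ≤ ε/4` (as
`log (m n M / ε) ≥ log 4 ≥ 1`) gives the second bound. -/

open Real

lemma rpow_le_exp_neg_mul {v δ t : ℝ} (hv0 : 0 ≤ v) (hv : v ≤ 1 - δ) (ht : 0 ≤ t) :
    v ^ t ≤ exp (-(δ * t)) :=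
  calc v ^ t ≤ (1 - δ) ^ t := rpow_le_rpow hv0 hv ht
    _ ≤ exp (-δ) ^ t := rpow_le_rpow (hv0.trans hv) (one_sub_le_exp_neg δ) ht
    _ = exp (-(δ * t)) := by rw [← exp_mul, neg_mul]

lemma rpow_one_div_le_inv_of_mul_log_le {v δ α R : ℝ} (hα : 0 < α) (hR : 0 < R)
    (hαR : α * log R ≤ δ) (hv0 : 0 ≤ v) (hv : v ≤ 1 - δ) : v ^ (1 / α) ≤ R⁻¹ := by
  have hlog : log R ≤ δ * (1 / α) := by
    rw [mul_one_div, le_div_iff₀ hα, mul_comm]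
    exact hαR
  calc v ^ (1 / α) ≤ exp (-(δ * (1 / α))) := rpow_le_exp_neg_mul hv0 hv (by positivity)
    _ ≤ exp (-log R) := exp_le_exp.mpr (neg_le_neg hlog)
    _ = R⁻¹ := by rw [exp_neg, exp_log hR]

lemma rpow_one_add_div_le_rpow_one_div {v α : ℝ} (hα : 0 < α) (hv0 : 0 ≤ v) (hv1 : v ≤ 1) :
    v ^ ((1 + α) / α) ≤ v ^ (1 / α) :=
  rpow_le_rpow_of_exponent_ge' hv0 hv1 (by positivity)
    (div_le_div_of_nonneg_right (by linarith) hα.le)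

lemma sum_rpow_one_add_div_le_card_div {ι : Type*} [Fintype ι] {f : ι → ℝ} {δ α R : ℝ}
    (hα : 0 < α) (hR : 0 < R) (hαR : α * log R ≤ δ) (hδ : 0 ≤ δ) (hf0 : ∀ i, 0 ≤ f i)
    (hf : ∀ i, f i ≤ 1 - δ) : ∑ i, f i ^ ((1 + α) / α) ≤ Fintype.card ι / R := by
  have h := Finset.sum_le_card_nsmul Finset.univ _ _ fun i _ =>
    (rpow_one_add_div_le_rpow_one_div hα (hf0 i) (by linarith [hf i])).trans
      (rpow_one_div_le_inv_of_mul_log_le hα hR hαR (hf0 i) (hf i))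
  rwa [nsmul_eq_mul, ← div_eq_mul_inv] at h

lemma one_le_log_of_four_le {R : ℝ} (hR : 4 ≤ R) : 1 ≤ log R := by
  rw [le_log_iff_exp_le (by linarith)]
  linarith [exp_one_lt_d9]

theorem approximate_barrier_inside_general (m n : ℕ) (hm : 1 ≤ m) (hn : 1 ≤ n)
    (ε α M : ℝ) (hε : 0 < ε) (hε4 : ε ≤ 1 / 4) (hM : 1 ≤ M)
    (hα : 0 < α) (hαle : α ≤ (ε / 4) / Real.log ((m : ℝ) * n * M / ε))
    (A : Matrix (Fin m) (Fin n) ℝ)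
    (x : Fin n → ℝ)
    (hAx0 : ∀ i, 0 ≤ A.mulVec x i)
    (hAx : ∀ i, A.mulVec x i ≤ 1 - ε / 2) :
    (∀ v : ℝ, 0 ≤ v → v ≤ 1 - ε / 2 → v ^ (1 / α) ≤ ε / ((m : ℝ) * n * M)) ∧
    (α / (1 + α)) * (∑ i, (A.mulVec x i) ^ ((1 + α) / α)) ≤ (ε / 4) * (1 / M) := by
  have hm1 : (1 : ℝ) ≤ m := by exact_mod_cast hm
  have hn1 : (1 : ℝ) ≤ n := by exact_mod_cast hn
  set R : ℝ := (m : ℝ) * n * M / ε with hRdef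
  have hR4 : 4 ≤ R := by
    rw [le_div_iff₀ hε]
    nlinarith [mul_le_mul hm1 hn1 zero_le_one (by positivity)]
  have hlogR := one_le_log_of_four_le hR4
  have hRpos : 0 < R := by linarith
  have hαR : α * log R ≤ ε / 2 := ((le_div_iff₀ (by linarith)).mp hαle).trans (by linarith)
  have hpow : ∀ v : ℝ, 0 ≤ v → v ≤ 1 - ε / 2 → v ^ (1 / α) ≤ ε / ((m : ℝ) * n * M) := by
    intro v hv0 hv
    have h := rpow_one_div_le_inv_of_mul_log_le hα hRpos hαR hv0 hv
    rwa [hRdef, inv_div] at h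
  refine ⟨hpow, ?_⟩
  have hsum : ∑ i, (A.mulVec x i) ^ ((1 + α) / α) ≤ 1 / M :=
    calc ∑ i, (A.mulVec x i) ^ ((1 + α) / α) ≤ m / R := by
          simpa using sum_rpow_one_add_div_le_card_div hα hRpos hαR (by positivity) hAx0 hAx
      _ = ε / (n * M) := by
          rw [hRdef]
          field_simp
      _ ≤ 1 / M := by
          rw [div_le_div_iff₀ (by positivity) (by positivity)]
          nlinarith
  have hfactor : α / (1 + α) ≤ ε / 4 :=
    (div_le_self hα.le (by linarith)).trans (hαle.trans (div_le_self (by positivity) hlogR))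
  exact mul_le_mul hfactor hsum (Finset.sum_nonneg fun i _ => rpow_nonneg (hAx0 i) _)
    (by positivity)

/-- approximate barrier property strictly inside the packing polytope. -/
theorem approximate_barrier_inside (m n : ℕ) (hm : 1 ≤ m) (hn : 1 ≤ n)
    (ε α M : ℝ) (hε : 0 < ε) (hε4 : ε ≤ 1 / 4) (hM : 1 ≤ M)
    (hR : 1 < (m : ℝ) * n * M / ε)
    (hα : 0 < α) (hαle : α ≤ (ε / 4) / Real.log ((m : ℝ) * n * M / ε))
    (A : Matrix (Fin m) (Fin n) ℝ) (hA0 : ∀ i j, 0 ≤ A i j)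
    (x : Fin n → ℝ)
    (hAx0 : ∀ i, 0 ≤ A.mulVec x i)
    (hAx : ∀ i, A.mulVec x i ≤ 1 - ε / 2) :
    (∀ v : ℝ, 0 ≤ v → v ≤ 1 - ε / 2 → v ^ (1 / α) ≤ ε / ((m : ℝ) * n * M)) ∧
    (α / (1 + α)) * (∑ i, (A.mulVec x i) ^ ((1 + α) / α)) ≤ (ε / 4) * (1 / M) :=
  approximate_barrier_inside_general m n hm hn ε α M hε hε4 hM hα hαle A x hAx0 hAx
end

section
/- Suppose 0 < α ≤ (ε/4)/log(mn‖A‖_∞/ε) with 0 < ε ≤ 1/4 and mn‖A‖_∞/ε ≥ e. If a real number v satisfies v ≥ 1 + ε/2, then v^{1/α} ≥ (mn‖A‖_∞/ε)^{7/4}. -/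
/-!
Since `α · log R ≤ ε / 4` for `R = mn‖A‖_∞/ε`, it suffices that `log v ≥ log (1 + ε/2) ≥ 7ε/16`;
then `(7/4) log R ≤ log v / α`, and exponentiating gives the claim.
-/

open Real

lemma mul_le_log_one_add_half {ε : ℝ} (hε : 0 ≤ ε) (hε47 : ε ≤ 4 / 7) :
    7 / 16 * ε ≤ log (1 + ε / 2) := by
  refine le_trans ?_ (le_log_one_add_of_nonneg (by positivity : 0 ≤ ε / 2))
  rw [le_div_iff₀ (by positivity)]
  nlinarith

-- For `x ≤ 0` the left side is a junk value of `rpow`, still bounded by `exp (log x * a)`.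
lemma rpow_le_rpow_of_log_mul_le {x y a b : ℝ} (hy : 0 < y) (h : log x * a ≤ log y * b) :
    x ^ a ≤ y ^ b := by
  rw [rpow_def_of_pos hy]
  exact (le_abs_self _).trans ((abs_rpow_le_exp_log_mul x a).trans (exp_le_exp.mpr h))

theorem approximate_barrier_outside_general (m n : ℕ) (ε α M : ℝ)
    (hε : 0 < ε) (hε4 : ε ≤ 1 / 4)
    (hα : 0 < α) (hαle : α ≤ (ε / 4) / Real.log ((m : ℝ) * n * M / ε))
    (v : ℝ) (hv : 1 + ε / 2 ≤ v) :
    ((m : ℝ) * n * M / ε) ^ ((7 : ℝ) / 4) ≤ v ^ (1 / α) := by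
  set R : ℝ := (m : ℝ) * n * M / ε
  have hlogR : 0 < log R := (div_pos_iff_of_pos_left (by positivity)).mp (hα.trans_le hαle)
  have hαlogR : α * log R ≤ ε / 4 := (le_div_iff₀ hlogR).mp hαle
  have hlogv : 7 / 16 * ε ≤ log v :=
    (mul_le_log_one_add_half hε.le (by linarith)).trans (log_le_log (by positivity) hv)
  refine rpow_le_rpow_of_log_mul_le (by linarith) ?_
  rw [mul_one_div, le_div_iff₀ hα]
  linarith

/-- blow-up of the barrier outside the packing polytope:
if `v ≥ 1 + ε/2` then `v^{1/α} ≥ (mn‖A‖_∞/ε)^{7/4}`. -/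
theorem approximate_barrier_outside (m n : ℕ) (ε α M : ℝ)
    (hε : 0 < ε) (hε4 : ε ≤ 1 / 4)
    (hR : Real.exp 1 ≤ (m : ℝ) * n * M / ε)
    (hα : 0 < α) (hαle : α ≤ (ε / 4) / Real.log ((m : ℝ) * n * M / ε))
    (v : ℝ) (hv : 1 + ε / 2 ≤ v) :
    ((m : ℝ) * n * M / ε) ^ ((7 : ℝ) / 4) ≤ v ^ (1 / α) :=
  approximate_barrier_outside_general m n ε α M hε hε4 hα hαle v hv
end

section
/- (Local multiplicative smoothness.) Let f_α(x) = −⟨1,x⟩ + (α/(1+α)) Σ_i (Ax)_i^{(1+α)/α} with A ≥ 0, 0 < α < 1, and let x ≥ 0 with Ax > 0. Let T_j denote the truncated gradient: T_j = ∇_j f_α(x) if ∇_j f_α(x) ∈ [−1,1] and T_j = 1 if ∇_j f_α(x) > 1. Let B = diag(β) with β_j = −c_j α T_j where c_j ∈ [0, 1/2). Then f_α(x + Bx) − f_α(x) ≤ −α Σ_j c_j(1 − 2c_j) ∇_j f_α(x) T_j x_j. -/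
/-!
With `s = A x` and `d = A (β x)`, every summand of `f` is `(sᵢ + dᵢ) ^ p` with `p = (1 + α) / α ≥ 2`
and `|dᵢ| ≤ (α / 2) sᵢ`. On that range the second derivative of `z ↦ z ^ p` is at most twice its
value at `sᵢ`, because `(1 + α / 2) ^ (p - 2) ≤ exp (1 / 2) < 2`; this gives a second-order Taylor
bound, and Cauchy–Schwarz bounds `dᵢ ^ 2` by `sᵢ (A (β² x))ᵢ`. Transposing `A` turns the first- and
second-order terms into `∑ⱼ (gⱼ + 1) βⱼ xⱼ` and `∑ⱼ (gⱼ + 1) βⱼ² xⱼ / α`, and the choice of `β`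
together with `Tⱼ² (gⱼ + 1) ≤ 2 gⱼ Tⱼ` closes the estimate.
-/

open Real Finset Matrix

theorem le_taylor_add_sq_of_hasDerivAt2_le {f f' f'' : ℝ → ℝ} {M a b : ℝ}
    (hf : ∀ z, HasDerivAt f (f' z) z) (hf' : ∀ z, HasDerivAt f' (f'' z) z)
    (hM : ∀ z ∈ Set.uIcc a b, f'' z ≤ M) :
    f b ≤ f a + f' a * (b - a) + M / 2 * (b - a) ^ 2 := by
  -- `g` is convex, so it lies above its tangent line at `a`
  set g : ℝ → ℝ := fun z => M / 2 * (z - a) ^ 2 - f z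
  have hg : ∀ z, HasDerivAt g (M * (z - a) - f' z) z := fun z => by
    refine (((((hasDerivAt_id z).sub_const a).fun_pow 2).const_mul (M / 2)).fun_sub
      (hf z)).congr_deriv ?_
    simp only [id, Nat.cast_ofNat, Nat.add_one_sub_one, pow_one, mul_one]
    ring
  have hg' : ∀ z, HasDerivAt (fun z => M * (z - a) - f' z) (M - f'' z) z := fun z => by
    refine ((((hasDerivAt_id z).sub_const a).const_mul M).fun_sub (hf' z)).congr_deriv ?_
    simp
  have hconv : ConvexOn ℝ (Set.uIcc a b) g :=
    convexOn_of_hasDerivWithinAt2_nonneg (convex_uIcc a b)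
      (fun z _ => (hg z).continuousAt.continuousWithinAt)
      (fun z _ => (hg z).hasDerivWithinAt) (fun z _ => (hg' z).hasDerivWithinAt)
      (fun z hz => sub_nonneg.2 (hM z (interior_subset hz)))
  rcases lt_trichotomy a b with hab | rfl | hab
  · have := hconv.le_slope_of_hasDerivAt Set.left_mem_uIcc Set.right_mem_uIcc hab (hg a)
    rw [slope_def_field, le_div_iff₀ (sub_pos.2 hab)] at this
    simp only [g] at this
    nlinarith
  · simp
  · have := hconv.slope_le_of_hasDerivAt Set.right_mem_uIcc Set.left_mem_uIcc hab (hg a)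
    rw [slope_def_field, div_le_iff₀ (sub_pos.2 hab)] at this
    simp only [g] at this
    nlinarith

theorem one_add_half_rpow_le_two {α : ℝ} (hα : 0 < α) (hα1 : α < 1) :
    (1 + α / 2) ^ ((1 - α) / α) ≤ 2 := by
  have hq : 0 ≤ (1 - α) / α := div_nonneg (by linarith) hα.le
  calc (1 + α / 2) ^ ((1 - α) / α) ≤ exp (α / 2) ^ ((1 - α) / α) := by
        gcongr
        linarith [add_one_le_exp (α / 2)]
    _ = exp ((1 - α) / 2) := by rw [← exp_mul]; congr 1; field_simp
    _ ≤ exp (1 / 2) := by gcongr; linarith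
    _ ≤ 2 := by
        rw [exp_half, sqrt_le_left (by norm_num)]
        linarith [exp_one_lt_d9]

theorem rpow_add_le_two_mul_rpow {α s z : ℝ} (hα : 0 < α) (hα1 : α < 1) (hs : 0 ≤ s)
    (hz : |z| ≤ α / 2 * s) : (s + z) ^ ((1 - α) / α) ≤ 2 * s ^ ((1 - α) / α) := by
  have hz' := abs_le.1 hz
  calc (s + z) ^ ((1 - α) / α) ≤ (s * (1 + α / 2)) ^ ((1 - α) / α) := by
        gcongr
        · nlinarith
        · linarith
    _ = s ^ ((1 - α) / α) * (1 + α / 2) ^ ((1 - α) / α) := mul_rpow hs (by positivity)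
    _ ≤ 2 * s ^ ((1 - α) / α) := by
        rw [mul_comm]
        gcongr
        exact one_add_half_rpow_le_two hα hα1

theorem rpow_add_le_of_abs_le {α s δ : ℝ} (hα : 0 < α) (hα1 : α < 1) (hs : 0 ≤ s)
    (hδ : |δ| ≤ α / 2 * s) :
    α / (1 + α) * (s + δ) ^ ((1 + α) / α) ≤
      α / (1 + α) * s ^ ((1 + α) / α) + s ^ (1 / α) * δ + s ^ ((1 - α) / α) * δ ^ 2 / α := by
  set p := (1 + α) / α
  have hαp : α / (1 + α) * p = 1 := by simp only [p]; field_simp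
  have hp1 : p - 1 = 1 / α := by simp only [p]; field_simp; ring
  have hp2 : p - 1 - 1 = (1 - α) / α := by rw [hp1]; field_simp
  have hp1_ge : 1 ≤ p - 1 := by rw [hp1, le_div_iff₀ hα]; linarith
  have hf : ∀ z, HasDerivAt (fun z => (s + z) ^ p) (p * (s + z) ^ (p - 1)) z := fun z => by
    refine (((hasDerivAt_id z).const_add s).rpow_const (Or.inr (by linarith))).congr_deriv ?_
    simp
  have hf' : ∀ z, HasDerivAt (fun z => p * (s + z) ^ (p - 1))
      (p * ((p - 1) * (s + z) ^ (p - 1 - 1))) z := fun z => by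
    refine ((((hasDerivAt_id z).const_add s).rpow_const (Or.inr hp1_ge)).const_mul
      p).congr_deriv ?_
    simp
  have hM : ∀ z ∈ Set.uIcc 0 δ,
      p * ((p - 1) * (s + z) ^ (p - 1 - 1)) ≤ p * ((p - 1) * (2 * s ^ (p - 1 - 1))) := by
    intro z hz
    have hzδ : |z| ≤ |δ| := by simpa using Set.abs_sub_left_of_mem_uIcc hz
    have := rpow_add_le_two_mul_rpow hα hα1 hs (hzδ.trans hδ)
    rw [hp2]
    gcongr
  have key := le_taylor_add_sq_of_hasDerivAt2_le hf hf' hM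
  simp only [add_zero, sub_zero] at key
  rw [hp2, hp1] at key
  calc α / (1 + α) * (s + δ) ^ p
      ≤ α / (1 + α) * (s ^ p + p * s ^ (1 / α) * δ +
          p * (1 / α * (2 * s ^ ((1 - α) / α))) / 2 * δ ^ 2) := by gcongr
    _ = _ := by linear_combination (s ^ (1 / α) * δ + s ^ ((1 - α) / α) * δ ^ 2 / α) * hαp

theorem rpow_add_le_of_sq_le_mul {α s d e : ℝ} (hα : 0 < α) (hα1 : α < 1) (hs : 0 ≤ s)
    (hd : |d| ≤ α / 2 * s) (hde : d ^ 2 ≤ s * e) :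
    α / (1 + α) * (s + d) ^ ((1 + α) / α) ≤
      α / (1 + α) * s ^ ((1 + α) / α) + s ^ (1 / α) * d + s ^ (1 / α) * e / α := by
  have hs_rpow : s ^ ((1 - α) / α) * s = s ^ (1 / α) := by
    rw [← rpow_add_one' hs (by positivity)]
    congr 1
    field_simp
    ring
  have hquad : s ^ ((1 - α) / α) * d ^ 2 ≤ s ^ (1 / α) * e := by
    rw [← hs_rpow, mul_assoc]
    gcongr
  have htaylor := rpow_add_le_of_abs_le hα hα1 hs hd
  have hquad_div : s ^ ((1 - α) / α) * d ^ 2 / α ≤ s ^ (1 / α) * e / α := by gcongr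
  linarith

section NonnegMatrix

variable {m n : Type*} [Fintype n] {A : Matrix m n ℝ} {x : n → ℝ}

theorem mulVec_nonneg_of_nonneg (hA : ∀ i j, 0 ≤ A i j) (hx : ∀ j, 0 ≤ x j) (i : m) :
    0 ≤ (A *ᵥ x) i :=
  sum_nonneg fun j _ => mul_nonneg (hA i j) (hx j)

theorem abs_mulVec_mul_le (hA : ∀ i j, 0 ≤ A i j) (hx : ∀ j, 0 ≤ x j) {β : n → ℝ} {r : ℝ}
    (hβ : ∀ j, |β j| ≤ r) (i : m) : |(A *ᵥ (β * x)) i| ≤ r * (A *ᵥ x) i := by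
  simp only [mulVec, dotProduct, Pi.mul_apply, mul_sum]
  refine (abs_sum_le_sum_abs _ _).trans (sum_le_sum fun j _ => ?_)
  rw [abs_mul, abs_mul, abs_of_nonneg (hA i j), abs_of_nonneg (hx j)]
  nlinarith [hβ j, mul_nonneg (hA i j) (hx j)]

theorem sq_mulVec_mul_le (hA : ∀ i j, 0 ≤ A i j) (hx : ∀ j, 0 ≤ x j) (β : n → ℝ) (i : m) :
    (A *ᵥ (β * x)) i ^ 2 ≤ (A *ᵥ x) i * (A *ᵥ (β ^ 2 * x)) i :=
  sum_sq_le_sum_mul_sum_of_sq_le_mul univ (fun j _ => mul_nonneg (hA i j) (hx j))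
    (fun j _ => mul_nonneg (hA i j) (mul_nonneg (sq_nonneg (β j)) (hx j)))
    (fun j _ => le_of_eq (by simp only [Pi.mul_apply, Pi.pow_apply]; ring))

theorem sum_rpow_mulVec_add_le [Fintype m] {α : ℝ} (hα : 0 < α) (hα1 : α < 1)
    (hA : ∀ i j, 0 ≤ A i j) (hx : ∀ j, 0 ≤ x j) {β : n → ℝ} (hβ : ∀ j, |β j| ≤ α / 2) :
    α / (1 + α) * ∑ i, (A *ᵥ (x + β * x)) i ^ ((1 + α) / α) ≤
      α / (1 + α) * ∑ i, (A *ᵥ x) i ^ ((1 + α) / α)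
        + ((fun i => (A *ᵥ x) i ^ (1 / α)) ᵥ* A) ⬝ᵥ (β * x)
        + ((fun i => (A *ᵥ x) i ^ (1 / α)) ᵥ* A) ⬝ᵥ (β ^ 2 * x) / α := by
  rw [← dotProduct_mulVec, ← dotProduct_mulVec, mulVec_add, mul_sum, mul_sum]
  simp only [dotProduct, Pi.add_apply, sum_div, ← sum_add_distrib]
  exact sum_le_sum fun i _ => rpow_add_le_of_sq_le_mul hα hα1 (mulVec_nonneg_of_nonneg hA hx i)
    (abs_mulVec_mul_le hA hx hβ i) (sq_mulVec_mul_le hA hx β i)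

end NonnegMatrix

theorem sq_mul_add_one_le_of_truncation {g T : ℝ} (hT : (g ≤ 1 → T = g) ∧ (1 < g → T = 1)) :
    T ^ 2 * (g + 1) ≤ 2 * g * T := by
  rcases le_or_gt g 1 with hg | hg
  · rw [hT.1 hg]
    nlinarith [sq_nonneg g]
  · rw [hT.2 hg]
    linarith

theorem abs_le_one_of_truncation {g T : ℝ} (hg : -1 ≤ g)
    (hT : (g ≤ 1 → T = g) ∧ (1 < g → T = 1)) : |T| ≤ 1 := by
  rcases le_or_gt g 1 with h | h
  · rw [hT.1 h, abs_le]
    exact ⟨hg, h⟩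
  · rw [hT.2 h, abs_one]

theorem abs_neg_mul_mul_le_half {α c T : ℝ} (hα : 0 < α) (hc₀ : 0 ≤ c) (hc : c ≤ 1 / 2)
    (hT : |T| ≤ 1) : |-c * α * T| ≤ α / 2 := by
  rw [abs_mul, abs_mul, abs_neg, abs_of_nonneg hc₀, abs_of_pos hα]
  calc c * α * |T| ≤ c * α * 1 := by gcongr
    _ ≤ α / 2 := by nlinarith

theorem linear_add_quadratic_le_of_truncation {α c g T x : ℝ} (hα : 0 < α) (hx : 0 ≤ x)
    (hT : (g ≤ 1 → T = g) ∧ (1 < g → T = 1)) :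
    g * (-c * α * T * x) + (g + 1) * (-c * α * T) ^ 2 * x / α ≤
      -α * (c * (1 - 2 * c) * g * T * x) := by
  have key := sq_mul_add_one_le_of_truncation hT
  have : α * c ^ 2 * x * (T ^ 2 * (g + 1) - 2 * g * T) ≤ 0 :=
    mul_nonpos_of_nonneg_of_nonpos (by positivity) (by linarith)
  calc g * (-c * α * T * x) + (g + 1) * (-c * α * T) ^ 2 * x / α
      = -α * (c * (1 - 2 * c) * g * T * x) + α * c ^ 2 * x * (T ^ 2 * (g + 1) - 2 * g * T) := by
        field_simp
        ring
    _ ≤ -α * (c * (1 - 2 * c) * g * T * x) := by linarith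

theorem local_multiplicative_smoothness_general (m n : ℕ) (α : ℝ)
    (hα : 0 < α) (hα1 : α < 1)
    (A : Matrix (Fin m) (Fin n) ℝ) (hA : ∀ i j, 0 ≤ A i j)
    (x : Fin n → ℝ) (hx : ∀ j, 0 ≤ x j)
    (f : (Fin n → ℝ) → ℝ)
    (hf : ∀ y : Fin n → ℝ, f y =
      -(∑ j, y j) + (α / (1 + α)) * ∑ i, (A.mulVec y i) ^ ((1 + α) / α))
    (g : Fin n → ℝ)
    (hg : ∀ j, g j = -1 + ∑ i, A i j * (A.mulVec x i) ^ (1 / α))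
    (T : Fin n → ℝ)
    (hT : ∀ j, (g j ≤ 1 → T j = g j) ∧ (1 < g j → T j = 1))
    (c : Fin n → ℝ) (hc : ∀ j, 0 ≤ c j ∧ c j < 1 / 2)
    (β : Fin n → ℝ) (hβ : ∀ j, β j = -(c j) * α * T j) :
    f (fun j => x j + β j * x j) - f x ≤
      -α * ∑ j, c j * (1 - 2 * c j) * g j * T j * x j := by
  set w := (fun i => (A *ᵥ x) i ^ (1 / α)) ᵥ* A
  have hgw : ∀ j, g j + 1 = w j := fun j => by
    simp only [hg j, w, vecMul, dotProduct, mul_comm (A _ j)]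
    ring
  have hg_ge : ∀ j, -1 ≤ g j := fun j => by
    rw [hg j]
    exact le_add_of_nonneg_right (sum_nonneg fun i _ =>
      mul_nonneg (hA i j) (rpow_nonneg (mulVec_nonneg_of_nonneg hA hx i) _))
  have hβ_abs : ∀ j, |β j| ≤ α / 2 := fun j => by
    rw [hβ j]
    exact abs_neg_mul_mul_le_half hα (hc j).1 (hc j).2.le
      (abs_le_one_of_truncation (hg_ge j) (hT j))
  calc f (x + β * x) - f x
      = -∑ j, β j * x j + (α / (1 + α) * ∑ i, (A *ᵥ (x + β * x)) i ^ ((1 + α) / α)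
          - α / (1 + α) * ∑ i, (A *ᵥ x) i ^ ((1 + α) / α)) := by
        rw [hf, hf]
        simp only [Pi.add_apply, Pi.mul_apply, sum_add_distrib]
        ring
    _ ≤ -∑ j, β j * x j + (w ⬝ᵥ (β * x) + w ⬝ᵥ (β ^ 2 * x) / α) := by
        linarith [sum_rpow_mulVec_add_le hα hα1 hA hx hβ_abs]
    _ = ∑ j, (g j * (β j * x j) + (g j + 1) * β j ^ 2 * x j / α) := by
        simp only [dotProduct, ← hgw, Pi.mul_apply, Pi.pow_apply, sum_div, ← sum_add_distrib,
          ← sum_neg_distrib]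
        congr 1; ext j; ring
    _ ≤ -α * ∑ j, c j * (1 - 2 * c j) * g j * T j * x j := by
        rw [mul_sum]
        refine sum_le_sum fun j _ => ?_
        simpa only [hβ j, mul_assoc] using linear_add_quadratic_le_of_truncation hα (hx j) (hT j)

/-- Local multiplicative smoothness, Lemma 1:
`f_α(x + Bx) − f_α(x) ≤ −α Σ_j c_j(1 − 2c_j) ∇_j f_α(x) T_j x_j`. -/
theorem local_multiplicative_smoothness (m n : ℕ) (α : ℝ)
    (hα : 0 < α) (hα1 : α < 1)
    (A : Matrix (Fin m) (Fin n) ℝ) (hA : ∀ i j, 0 ≤ A i j)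
    (x : Fin n → ℝ) (hx : ∀ j, 0 ≤ x j) (hAx : ∀ i, 0 < A.mulVec x i)
    (f : (Fin n → ℝ) → ℝ)
    (hf : ∀ y : Fin n → ℝ, f y =
      -(∑ j, y j) + (α / (1 + α)) * ∑ i, (A.mulVec y i) ^ ((1 + α) / α))
    (g : Fin n → ℝ)
    (hg : ∀ j, g j = -1 + ∑ i, A i j * (A.mulVec x i) ^ (1 / α))
    (T : Fin n → ℝ)
    (hT : ∀ j, (g j ≤ 1 → T j = g j) ∧ (1 < g j → T j = 1))
    (c : Fin n → ℝ) (hc : ∀ j, 0 ≤ c j ∧ c j < 1 / 2)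
    (β : Fin n → ℝ) (hβ : ∀ j, β j = -(c j) * α * T j) :
    f (fun j => x j + β j * x j) - f x ≤
      -α * ∑ j, c j * (1 - 2 * c j) * g j * T j * x j :=
  local_multiplicative_smoothness_general m n α hα hα1 A hA x hx f hf g hg T hT c hc β hβ
end
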